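/- Let 0 < ℓ < 1 and let (t_k)_{k∈ℕ} be a strictly increasing sequence of positive integers satisfying t_{k+1}/t_k > 1/ℓ + 1 for all k ∈ ℕ. Let (u_k)_{k∈ℕ} be any sequence of real numbers with 0 ≤ u_k and u_k + ℓ ≤ 1 for all k. Then there exists α ∈ [0, 1] such that for every k ∈ ℕ, the fractional part of t_k·α lies in the closed interval [u_k, u_k + ℓ]. -/

import Mathlib

/-!
Nested intervals. The set of `α` with `t k * α ∈ [m + u k, m + u k + ℓ]` for a fixed integer
`m` is an interval of length `ℓ / t k`. Inside such an interval `[a, a + ℓ / t k]`, the next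
admissible interval `[a', a' + ℓ / t (k+1)]` can be chosen with `a ≤ a' < a + 1 / t (k+1)`,
by rounding `t (k+1) * a - u (k+1)` up to an integer; the growth condition on `t` gives
`(1 + ℓ) / t (k+1) ≤ ℓ / t k`, so the new interval sits inside the old one, even with a
strict inequality at the right end. The supremum of the left endpoints lies in every interval
and avoids every right endpoint, so `t k * α` never reaches the integer `m + 1`. When the `t k`
are integers, `α` may then be replaced by its fractional part.
-/

open Set

section FloorRing

variable {R : Type*} [CommRing R] [LinearOrder R] [IsStrictOrderedRing R] [FloorRing R]

lemma Int.fract_natCast_mul_fract (n : ℕ) (x : R) :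
    Int.fract (n * Int.fract x) = Int.fract (n * x) :=
  Int.fract_eq_fract.2 ⟨-(n * ⌊x⌋), by push_cast; rw [← Int.self_sub_floor]; ring⟩

lemma Int.fract_mem_Icc_of_mem_Ico {x u ℓ : R} {m : ℤ} (hu₀ : 0 ≤ u) (hu₁ : u + ℓ ≤ 1)
    (hx : x ∈ Ico (m + u) (m + u + ℓ)) : Int.fract x ∈ Icc u (u + ℓ) := by
  have hfract : Int.fract x = x - m :=
    Int.fract_eq_iff.2 ⟨by linarith [hx.1], by linarith [hx.2], m, by abel⟩
  rw [hfract]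
  constructor <;> linarith [hx.1, hx.2]

end FloorRing

section Field

variable {K : Type*} [Field K] [LinearOrder K] [IsStrictOrderedRing K]

lemma ceil_sub_add_div_mem_Ico [FloorRing K] {T : K} (hT : 0 < T) (a u : K) :
    (⌈T * a - u⌉ + u) / T ∈ Ico a (a + 1 / T) := by
  rw [mem_Ico, le_div_iff₀ hT, div_lt_iff₀ hT, add_mul, one_div_mul_cancel hT.ne']
  constructor <;> linarith [Int.le_ceil (T * a - u), Int.ceil_lt_add_one (T * a - u)]

lemma one_add_div_lt_div_of_inv_add_one_lt_div {ℓ T T' : K} (hℓ : 0 < ℓ) (hT : 0 < T)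
    (hT' : 0 < T') (h : 1 / ℓ + 1 < T' / T) : (1 + ℓ) / T' < ℓ / T := by
  rw [div_lt_div_iff₀ hT' hT]
  rw [lt_div_iff₀ hT, div_add_one hℓ.ne', div_mul_eq_mul_div, div_lt_iff₀ hℓ] at h
  linarith

end Field

noncomputable def leftEndpoint (t u : ℕ → ℝ) : ℕ → ℝ
  | 0 => u 0 / t 0
  | k + 1 => (⌈t (k + 1) * leftEndpoint t u k - u (k + 1)⌉ + u (k + 1)) / t (k + 1)

section leftEndpoint

variable {t u : ℕ → ℝ}

lemma exists_intCast_add_eq_mul_leftEndpoint (k : ℕ) (ht : t k ≠ 0) :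
    ∃ m : ℤ, t k * leftEndpoint t u k = m + u k := by
  cases k with
  | zero => exact ⟨0, by simp [leftEndpoint, mul_div_cancel₀ _ ht]⟩
  | succ k => exact ⟨_, mul_div_cancel₀ _ ht⟩

lemma leftEndpoint_succ_mem_Ico (k : ℕ) (ht : 0 < t (k + 1)) :
    leftEndpoint t u (k + 1) ∈ Ico (leftEndpoint t u k) (leftEndpoint t u k + 1 / t (k + 1)) :=
  ceil_sub_add_div_mem_Ico ht _ _

lemma monotone_leftEndpoint (ht : ∀ k, 0 < t k) : Monotone (leftEndpoint t u) :=
  monotone_nat_of_le_succ fun k => (leftEndpoint_succ_mem_Ico k (ht (k + 1))).1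

lemma strictAnti_leftEndpoint_add_div {ℓ : ℝ} (ht : ∀ k, 0 < t k)
    (hstep : ∀ k, (1 + ℓ) / t (k + 1) ≤ ℓ / t k) :
    StrictAnti fun k => leftEndpoint t u k + ℓ / t k := by
  refine strictAnti_nat_of_succ_lt fun k => ?_
  have hlt := (leftEndpoint_succ_mem_Ico (u := u) k (ht (k + 1))).2
  have := hstep k
  rw [add_div] at this
  linarith

end leftEndpoint

theorem exists_fract_mul_mem_Icc {ℓ : ℝ} {t u : ℕ → ℝ} (hℓ : 0 ≤ ℓ) (ht : ∀ k, 0 < t k)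
    (hstep : ∀ k, (1 + ℓ) / t (k + 1) ≤ ℓ / t k) (hu₀ : ∀ k, 0 ≤ u k)
    (hu₁ : ∀ k, u k + ℓ ≤ 1) :
    ∃ α : ℝ, ∀ k, Int.fract (t k * α) ∈ Icc (u k) (u k + ℓ) := by
  set a := leftEndpoint t u
  set b := fun k => a k + ℓ / t k
  have hb := strictAnti_leftEndpoint_add_div (u := u) ht hstep
  have hα := mem_iInter.1 <| (monotone_leftEndpoint ht).ciSup_mem_iInter_Icc_of_antitone
    hb.antitone fun k => le_add_of_nonneg_right (div_nonneg hℓ (ht k).le)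
  refine ⟨⨆ k, a k, fun k => ?_⟩
  obtain ⟨m, hm⟩ := exists_intCast_add_eq_mul_leftEndpoint (u := u) k (ht k).ne'
  refine Int.fract_mem_Icc_of_mem_Ico (m := m) (hu₀ k) (hu₁ k) ⟨?_, ?_⟩
  · rw [← hm]
    exact mul_le_mul_of_nonneg_left (hα k).1 (ht k).le
  · have hlt : (⨆ k, a k) < b k := (hα (k + 1)).2.trans_lt (hb k.lt_succ_self)
    calc t k * ⨆ k, a k < t k * b k := mul_lt_mul_of_pos_left hlt (ht k)
      _ = m + u k + ℓ := by rw [mul_add, hm, mul_div_cancel₀ _ (ht k).ne']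

theorem exists_alpha_fract_in_intervals (ℓ : ℝ) (hℓ₀ : 0 < ℓ)
    (t : ℕ → ℕ) (htpos : ∀ k, 0 < t k)
    (hratio : ∀ k, 1 / ℓ + 1 < (t (k + 1) : ℝ) / (t k : ℝ))
    (u : ℕ → ℝ) (hu₀ : ∀ k, 0 ≤ u k) (hu₁ : ∀ k, u k + ℓ ≤ 1) :
    ∃ α ∈ Set.Icc (0 : ℝ) 1, ∀ k : ℕ,
      Int.fract ((t k : ℝ) * α) ∈ Set.Icc (u k) (u k + ℓ) := by
  have ht : ∀ k, (0 : ℝ) < t k := fun k => Nat.cast_pos.2 (htpos k)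
  obtain ⟨α, hα⟩ := exists_fract_mul_mem_Icc hℓ₀.le ht
    (fun k => (one_add_div_lt_div_of_inv_add_one_lt_div hℓ₀ (ht k) (ht (k + 1)) (hratio k)).le)
    hu₀ hu₁
  refine ⟨Int.fract α, ⟨Int.fract_nonneg α, (Int.fract_lt_one α).le⟩, fun k => ?_⟩
  rw [Int.fract_natCast_mul_fract]
  exact hα k
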